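/- arXiv:2304.05861 — 4 statements merged into one kernel-verified Lean document; each statement's English description precedes it below -/
import Mathlib

section
/- Let γ^L, γ^R : ℝ → ℝ² be differentiable at 0, let x₀ ∈ ℝ² and c₁, c₂ ∈ ℝ with c₁ ≠ 0, and for S ∈ {L, R} define the scaled boundary parametrization F^S(ζ, ξ) := (c₁ξ + c₂)·(γ^S(ζ) − x₀) + x₀. Suppose d₁, d₂ ∈ ℝ satisfy d₁·(γ^L)'(0) + d₂·(γ^R)'(0) = γ^L(0) − x₀. Set α^R := d₁, α^L := −d₂ and β(ξ) := −(c₁ξ + c₂)/c₁. Then for every ξ ∈ ℝ: α^R·∂_ζF^L(0, ξ) − α^L·∂_ζF^R(0, ξ) + β(ξ)·∂_ξF^L(0, ξ) = 0 in ℝ², where ∂_ζF^S(0, ξ) denotes the derivative at ζ = 0 of the curve ζ ↦ F^S(ζ, ξ) and ∂_ξF^L(0, ξ) denotes the derivative at ξ of the curve ξ' ↦ F^L(0, ξ'). -/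
/-! Along `ζ` the patch `F^S(·, ξ)` is the boundary curve scaled by `c₁ξ + c₂`, and along `ξ` it
moves linearly towards the scaling center with velocity `c₁ (γ^S(ζ) - x₀)`. After substituting
these derivatives, the left-hand side is `(c₁ξ + c₂)` times
`d₁ (γ^L)'(0) + d₂ (γ^R)'(0) - (γ^L(0) - x₀)`, which vanishes by the choice of `d₁, d₂`. -/

section ScaledBoundary

variable {𝕜 E : Type*} [NontriviallyNormedField 𝕜] [NormedAddCommGroup E] [NormedSpace 𝕜 E]

def scaledBoundary (γ : 𝕜 → E) (x₀ : E) (c₁ c₂ : 𝕜) (ζ ξ : 𝕜) : E :=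
  (c₁ * ξ + c₂) • (γ ζ - x₀) + x₀

theorem deriv_scaledBoundary_left (γ : 𝕜 → E) (x₀ : E) (c₁ c₂ ξ t : 𝕜) :
    deriv (fun ζ => scaledBoundary γ x₀ c₁ c₂ ζ ξ) t = (c₁ * ξ + c₂) • deriv γ t := by
  simp only [scaledBoundary, deriv_add_const, deriv_fun_const_smul_field, deriv_sub_const]

theorem hasDerivAt_scaledBoundary_right (γ : 𝕜 → E) (x₀ : E) (c₁ c₂ ζ ξ : 𝕜) :
    HasDerivAt (fun ξ' => scaledBoundary γ x₀ c₁ c₂ ζ ξ') (c₁ • (γ ζ - x₀)) ξ := by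
  have h := (((hasDerivAt_id ξ).const_mul c₁).add_const c₂).smul_const (γ ζ - x₀)
  simpa only [scaledBoundary, mul_one, id] using h.add_const x₀

theorem deriv_scaledBoundary_right (γ : 𝕜 → E) (x₀ : E) (c₁ c₂ ζ ξ : 𝕜) :
    deriv (fun ξ' => scaledBoundary γ x₀ c₁ c₂ ζ ξ') ξ = c₁ • (γ ζ - x₀) :=
  (hasDerivAt_scaledBoundary_right γ x₀ c₁ c₂ ζ ξ).deriv

end ScaledBoundary

theorem sb_iga_asg1_identity_general
    (γL γR : ℝ → ℝ × ℝ)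
    (x₀ : ℝ × ℝ) (c₁ c₂ : ℝ) (hc₁ : c₁ ≠ 0)
    (d₁ d₂ : ℝ)
    (hd : d₁ • deriv γL 0 + d₂ • deriv γR 0 = γL 0 - x₀)
    (FL FR : ℝ → ℝ → ℝ × ℝ)
    (hFL : ∀ ζ ξ, FL ζ ξ = (c₁ * ξ + c₂) • (γL ζ - x₀) + x₀)
    (hFR : ∀ ζ ξ, FR ζ ξ = (c₁ * ξ + c₂) • (γR ζ - x₀) + x₀) :
    ∀ ξ : ℝ,
      d₁ • deriv (fun ζ => FL ζ ξ) 0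
        - (-d₂) • deriv (fun ζ => FR ζ ξ) 0
        + (-(c₁ * ξ + c₂) / c₁) • deriv (fun ξ' => FL 0 ξ') ξ = 0 := by
  intro ξ
  obtain rfl : FL = scaledBoundary γL x₀ c₁ c₂ := funext₂ hFL
  obtain rfl : FR = scaledBoundary γR x₀ c₁ c₂ := funext₂ hFR
  rw [deriv_scaledBoundary_left, deriv_scaledBoundary_left, deriv_scaledBoundary_right,
    smul_smul (_ / c₁), div_mul_cancel₀ _ hc₁, ← hd]
  module

/-- The central computation in the proof that scaled boundary two-patch parametrizations
are quasi analysis-suitable G¹: with `F^S(ζ,ξ) = (c₁ξ + c₂) • (γ^S(ζ) - x₀) + x₀` and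
`d₁ • (γ^L)'(0) + d₂ • (γ^R)'(0) = γ^L(0) - x₀`, setting `α^R = d₁`, `α^L = -d₂`,
`β(ξ) = -(c₁ξ + c₂)/c₁`, the AS-G¹ identity holds for every `ξ`. -/
theorem sb_iga_asg1_identity
    (γL γR : ℝ → ℝ × ℝ)
    (hγL : DifferentiableAt ℝ γL 0) (hγR : DifferentiableAt ℝ γR 0)
    (x₀ : ℝ × ℝ) (c₁ c₂ : ℝ) (hc₁ : c₁ ≠ 0)
    (d₁ d₂ : ℝ)
    (hd : d₁ • deriv γL 0 + d₂ • deriv γR 0 = γL 0 - x₀)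
    (FL FR : ℝ → ℝ → ℝ × ℝ)
    (hFL : ∀ ζ ξ, FL ζ ξ = (c₁ * ξ + c₂) • (γL ζ - x₀) + x₀)
    (hFR : ∀ ζ ξ, FR ζ ξ = (c₁ * ξ + c₂) • (γR ζ - x₀) + x₀) :
    ∀ ξ : ℝ,
      d₁ • deriv (fun ζ => FL ζ ξ) 0
        - (-d₂) • deriv (fun ζ => FR ζ ξ) 0
        + (-(c₁ * ξ + c₂) / c₁) • deriv (fun ξ' => FL 0 ξ') ξ = 0 :=
  sb_iga_asg1_identity_general γL γR x₀ c₁ c₂ hc₁ d₁ d₂ hd FL FR hFL hFR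
end

section
/- (SB-IGA patch coupling is quasi AS-G¹.) Let γ^L, γ^R : ℝ → ℝ² be differentiable at 0 with γ^L(0) = γ^R(0), (γ^L)'(0) ≠ 0 and (γ^R)'(0) ≠ 0, let x₀ ∈ ℝ², c₁ > 0, c₂ ≥ 0, and define F^S(ζ, ξ) := (c₁ξ + c₂)·(γ^S(ζ) − x₀) + x₀ for S ∈ {L, R}. Assume either (i) (γ^R)'(0) = c·(γ^L)'(0) for some c > 0, or (ii) (γ^L)'(0) and (γ^R)'(0) are linearly independent and neither γ^L(0) − x₀ nor x₀ − γ^L(0) lies in the closed cone {a₁·(γ^L)'(0) + a₂·(γ^R)'(0) : a₁ ≥ 0, a₂ ≥ 0}. Then there exist constants α^L, α^R ∈ ℝ and polynomial functions β, β^L, β^R : ℝ → ℝ of degree at most 1 such that α^L·α^R > 0, β = α^L·β^R − α^R·β^L, and for all ξ ∈ [0, 1]: α^R·∂_ζF^L(0, ξ) − α^L·∂_ζF^R(0, ξ) + β(ξ)·∂_ξF^L(0, ξ) = 0 in ℝ². -/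
/-!
Along the interface `ζ = 0` both `ζ`-derivatives are the tangents `(γ^S)'(0)` scaled by the same
factor `c₁ξ + c₂`, while the `ξ`-derivative of `F^L` is the constant `c₁ (γ^L(0) - x₀)`. For
parallel tangents the two `ζ`-derivatives already cancel with `β = 0`. For independent tangents
write `γ^L(0) - x₀ = a₁ (γ^L)'(0) + a₂ (γ^R)'(0)`; the cone condition says exactly that `a₁` and
`a₂` have strictly opposite signs, so `α^L = a₂`, `α^R = -a₁` and `β(ξ) = ξ + c₂ / c₁` work.
-/

section

variable {E : Type*} [NormedAddCommGroup E] [NormedSpace ℝ E]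

theorem deriv_smul_sub_add (a : ℝ) (f : ℝ → E) (x₀ : E) (t : ℝ) :
    deriv (fun ζ => a • (f ζ - x₀) + x₀) t = a • deriv f t := by
  rw [deriv_add_const, ← deriv_sub_const (f := f) x₀]
  exact deriv_const_smul_field a (fun ζ => f ζ - x₀)

theorem deriv_affine_smul_add (c₁ c₂ : ℝ) (v x₀ : E) (ξ : ℝ) :
    deriv (fun ξ' => (c₁ * ξ' + c₂) • v + x₀) ξ = c₁ • v :=
  ((((hasDerivAt_id ξ).const_mul c₁).add_const c₂).smul_const v |>.add_const x₀).deriv.trans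
    (by simp)

end

section

variable {E : Type*} [AddCommGroup E] [Module ℝ E]

def pairCone (v w : E) : Set E :=
  {x | ∃ a₁ a₂ : ℝ, 0 ≤ a₁ ∧ 0 ≤ a₂ ∧ x = a₁ • v + a₂ • w}

theorem mul_neg_of_not_nonneg_of_not_nonpos {α : Type*} [Ring α] [LinearOrder α]
    [IsStrictOrderedRing α] {a b : α} (h₁ : ¬(0 ≤ a ∧ 0 ≤ b))
    (h₂ : ¬(a ≤ 0 ∧ b ≤ 0)) : a * b < 0 := by
  rcases le_total 0 a with ha | ha <;> rcases le_total 0 b with hb | hb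
  · exact absurd ⟨ha, hb⟩ h₁
  · exact mul_neg_of_pos_of_neg (ha.lt_of_ne fun h => h₂ ⟨h.ge, hb⟩)
      (hb.lt_of_ne fun h => h₁ ⟨ha, h.ge⟩)
  · exact mul_neg_of_neg_of_pos (ha.lt_of_ne fun h => h₁ ⟨h.ge, hb⟩)
      (hb.lt_of_ne' fun h => h₂ ⟨ha, h.le⟩)
  · exact absurd ⟨ha, hb⟩ h₂

theorem exists_eq_smul_add_smul_of_finrank_eq_two [FiniteDimensional ℝ E]
    (h2 : Module.finrank ℝ E = 2) {v w : E} (hvw : LinearIndependent ℝ ![v, w]) (u : E) :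
    ∃ a₁ a₂ : ℝ, u = a₁ • v + a₂ • w := by
  have hspan := hvw.span_eq_top_of_card_eq_finrank (by simp [h2])
  rw [Matrix.range_cons_cons_empty] at hspan
  obtain ⟨a₁, a₂, hu⟩ := Submodule.mem_span_pair.mp (hspan ▸ Submodule.mem_top : u ∈ _)
  exact ⟨a₁, a₂, hu.symm⟩

theorem exists_coeffs_mul_neg_of_not_mem_pairCone [FiniteDimensional ℝ E]
    (h2 : Module.finrank ℝ E = 2) {v w u : E} (hvw : LinearIndependent ℝ ![v, w])
    (hu : u ∉ pairCone v w) (hnu : -u ∉ pairCone v w) :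
    ∃ a₁ a₂ : ℝ, a₁ * a₂ < 0 ∧ u = a₁ • v + a₂ • w := by
  obtain ⟨a₁, a₂, hrep⟩ := exists_eq_smul_add_smul_of_finrank_eq_two h2 hvw u
  refine ⟨a₁, a₂, mul_neg_of_not_nonneg_of_not_nonpos ?_ ?_, hrep⟩
  · exact fun ⟨h₁, h₂⟩ => hu ⟨a₁, a₂, h₁, h₂, hrep⟩
  · refine fun ⟨h₁, h₂⟩ => hnu ⟨-a₁, -a₂, neg_nonneg.mpr h₁, neg_nonneg.mpr h₂, ?_⟩
    rw [hrep]
    module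

/-- The AS-G¹ identity along the interface, with `v^S = (γ^S)'(0)`, `u = γ^L(0) - x₀` and
`β(ξ) = b₀ + b₁ξ`. -/
def HasAffineCoupling (c₁ c₂ : ℝ) (vL vR u : E) : Prop :=
  ∃ αL αR b₀ b₁ : ℝ, 0 < αL * αR ∧ ∀ ξ : ℝ,
    αR • ((c₁ * ξ + c₂) • vL) - αL • ((c₁ * ξ + c₂) • vR) + (b₀ + b₁ * ξ) • (c₁ • u) = 0

theorem hasAffineCoupling_of_eq_smul (c₁ c₂ : ℝ) {vL vR : E} (u : E) {c : ℝ} (hc : 0 < c)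
    (hvR : vR = c • vL) : HasAffineCoupling c₁ c₂ vL vR u :=
  ⟨1, c, 0, 0, by simpa using hc, fun ξ => by rw [hvR]; module⟩

theorem hasAffineCoupling_of_eq_smul_add_smul {c₁ : ℝ} (hc₁ : c₁ ≠ 0) (c₂ : ℝ) {vL vR u : E}
    {a₁ a₂ : ℝ} (ha : a₁ * a₂ < 0) (hu : u = a₁ • vL + a₂ • vR) :
    HasAffineCoupling c₁ c₂ vL vR u := by
  refine ⟨a₂, -a₁, c₂ / c₁, 1, by linarith, fun ξ => ?_⟩
  have hβ : (c₂ / c₁ + 1 * ξ) * c₁ = c₁ * ξ + c₂ := by field_simp; ring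
  rw [smul_smul _ c₁, hβ, hu]
  module

end

theorem sb_iga_quasi_asg1_general
    (γL γR : ℝ → ℝ × ℝ)
    (x₀ : ℝ × ℝ) (c₁ c₂ : ℝ) (hc₁ : 0 < c₁)
    (FL FR : ℝ → ℝ → ℝ × ℝ)
    (hFL : ∀ ζ ξ, FL ζ ξ = (c₁ * ξ + c₂) • (γL ζ - x₀) + x₀)
    (hFR : ∀ ζ ξ, FR ζ ξ = (c₁ * ξ + c₂) • (γR ζ - x₀) + x₀)
    (hcase :
      (∃ c : ℝ, 0 < c ∧ deriv γR 0 = c • deriv γL 0) ∨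
      (LinearIndependent ℝ ![deriv γL 0, deriv γR 0] ∧
        γL 0 - x₀ ∉ {x : ℝ × ℝ | ∃ a₁ a₂ : ℝ, 0 ≤ a₁ ∧ 0 ≤ a₂ ∧
          x = a₁ • deriv γL 0 + a₂ • deriv γR 0} ∧
        x₀ - γL 0 ∉ {x : ℝ × ℝ | ∃ a₁ a₂ : ℝ, 0 ≤ a₁ ∧ 0 ≤ a₂ ∧
          x = a₁ • deriv γL 0 + a₂ • deriv γR 0})) :
    ∃ (αL αR : ℝ) (β βL βR : ℝ → ℝ),
      (∃ b₀ b₁ : ℝ, ∀ ξ, β ξ = b₀ + b₁ * ξ) ∧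
      (∃ b₀ b₁ : ℝ, ∀ ξ, βL ξ = b₀ + b₁ * ξ) ∧
      (∃ b₀ b₁ : ℝ, ∀ ξ, βR ξ = b₀ + b₁ * ξ) ∧
      αL * αR > 0 ∧
      (∀ ξ, β ξ = αL * βR ξ - αR * βL ξ) ∧
      ∀ ξ ∈ Set.Icc (0 : ℝ) 1,
        αR • deriv (fun ζ => FL ζ ξ) 0
          - αL • deriv (fun ζ => FR ζ ξ) 0
          + β ξ • deriv (fun ξ' => FL 0 ξ') ξ = 0 := by
  have hcoupling : HasAffineCoupling c₁ c₂ (deriv γL 0) (deriv γR 0) (γL 0 - x₀) := by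
    rcases hcase with ⟨c, hc, hvR⟩ | ⟨hli, hcone, hcone'⟩
    · exact hasAffineCoupling_of_eq_smul c₁ c₂ _ hc hvR
    · rw [← neg_sub] at hcone'
      obtain ⟨a₁, a₂, ha, hu⟩ :=
        exists_coeffs_mul_neg_of_not_mem_pairCone (by simp) hli hcone hcone'
      exact hasAffineCoupling_of_eq_smul_add_smul hc₁.ne' c₂ ha hu
  obtain ⟨αL, αR, b₀, b₁, hα, hid⟩ := hcoupling
  have hαL : αL ≠ 0 := left_ne_zero_of_mul hα.ne'
  refine ⟨αL, αR, fun ξ => b₀ + b₁ * ξ, 0, fun ξ => b₀ / αL + b₁ / αL * ξ,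
    ⟨b₀, b₁, fun _ => rfl⟩, ⟨0, 0, fun _ => by simp⟩, ⟨_, _, fun _ => rfl⟩, hα,
    fun ξ => by field_simp; simp, fun ξ _ => ?_⟩
  simp only [hFL, hFR, deriv_smul_sub_add, deriv_affine_smul_add]
  exact hid ξ

/-- SB-IGA patch coupling is quasi AS-G¹: for a scaled boundary two-patch parametrization
`F^S(ζ,ξ) = (c₁ξ + c₂) • (γ^S(ζ) - x₀) + x₀`, under either the parallel-tangent case (i) or the
linearly-independent-tangents-with-cone-condition case (ii), there exist constants `α^L, α^R`
and degree-≤1 polynomial functions `β, β^L, β^R` with `α^L·α^R > 0`,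
`β = α^L·β^R − α^R·β^L`, satisfying the AS-G¹ identity on `[0,1]`. -/
theorem sb_iga_quasi_asg1
    (γL γR : ℝ → ℝ × ℝ)
    (hγL : DifferentiableAt ℝ γL 0) (hγR : DifferentiableAt ℝ γR 0)
    (hmeet : γL 0 = γR 0)
    (hL0 : deriv γL 0 ≠ 0) (hR0 : deriv γR 0 ≠ 0)
    (x₀ : ℝ × ℝ) (c₁ c₂ : ℝ) (hc₁ : 0 < c₁) (hc₂ : 0 ≤ c₂)
    (FL FR : ℝ → ℝ → ℝ × ℝ)
    (hFL : ∀ ζ ξ, FL ζ ξ = (c₁ * ξ + c₂) • (γL ζ - x₀) + x₀)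
    (hFR : ∀ ζ ξ, FR ζ ξ = (c₁ * ξ + c₂) • (γR ζ - x₀) + x₀)
    (hcase :
      (∃ c : ℝ, 0 < c ∧ deriv γR 0 = c • deriv γL 0) ∨
      (LinearIndependent ℝ ![deriv γL 0, deriv γR 0] ∧
        γL 0 - x₀ ∉ {x : ℝ × ℝ | ∃ a₁ a₂ : ℝ, 0 ≤ a₁ ∧ 0 ≤ a₂ ∧
          x = a₁ • deriv γL 0 + a₂ • deriv γR 0} ∧
        x₀ - γL 0 ∉ {x : ℝ × ℝ | ∃ a₁ a₂ : ℝ, 0 ≤ a₁ ∧ 0 ≤ a₂ ∧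
          x = a₁ • deriv γL 0 + a₂ • deriv γR 0})) :
    ∃ (αL αR : ℝ) (β βL βR : ℝ → ℝ),
      (∃ b₀ b₁ : ℝ, ∀ ξ, β ξ = b₀ + b₁ * ξ) ∧
      (∃ b₀ b₁ : ℝ, ∀ ξ, βL ξ = b₀ + b₁ * ξ) ∧
      (∃ b₀ b₁ : ℝ, ∀ ξ, βR ξ = b₀ + b₁ * ξ) ∧
      αL * αR > 0 ∧
      (∀ ξ, β ξ = αL * βR ξ - αR * βL ξ) ∧
      ∀ ξ ∈ Set.Icc (0 : ℝ) 1,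
        αR • deriv (fun ζ => FL ζ ξ) 0
          - αL • deriv (fun ζ => FR ζ ξ) 0
          + β ξ • deriv (fun ξ' => FL 0 ξ') ξ = 0 :=
  sb_iga_quasi_asg1_general γL γR x₀ c₁ c₂ hc₁ FL FR hFL hFR hcase
end

section
/- Let γ = (γ₁, γ₂) : ℝ → ℝ² be differentiable at ζ ∈ ℝ with d(ζ) := γ₁'(ζ)·γ₂(ζ) − γ₂'(ζ)·γ₁(ζ) ≠ 0, let ξ ≠ 0, and let φ : ℝ² → ℝ be differentiable at the point p := ξ·γ(ζ). Define φ̂(ζ', ξ') := φ(ξ'·γ(ζ')). Then the partial derivatives ∂_ζφ̂(ζ, ξ) (derivative at ζ of ζ' ↦ φ̂(ζ', ξ)) and ∂_ξφ̂(ζ, ξ) (derivative at ξ of ξ' ↦ φ̂(ζ, ξ')) exist, and the physical partial derivatives of φ at p are recovered as ∂_xφ(p) = (γ₂(ζ)·∂_ζφ̂(ζ, ξ) − ξ·γ₂'(ζ)·∂_ξφ̂(ζ, ξ)) / (ξ·d(ζ)) and ∂_yφ(p) = (−γ₁(ζ)·∂_ζφ̂(ζ, ξ) + ξ·γ₁'(ζ)·∂_ξφ̂(ζ,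 ξ)) / (ξ·d(ζ)). -/
/-!
Both parametric derivatives of `φ̂(ζ', ξ') = φ(ξ' • γ(ζ'))` are values of the single linear form
`A = Dφ(ξ • γ(ζ))`: by the chain rule `∂_ζφ̂ = A(ξ • γ'(ζ))` and `∂_ξφ̂ = A(γ(ζ))`. Writing these in
terms of `∂_xφ = A(1, 0)` and `∂_yφ = A(0, 1)` gives a 2 × 2 linear system with determinant
`ξ · d(ζ) ≠ 0`, and Cramer's rule yields the formulas.
-/

section ChainRule

variable {𝕜 E F : Type*} [NontriviallyNormedField 𝕜]
  [NormedAddCommGroup E] [NormedSpace 𝕜 E] [NormedAddCommGroup F] [NormedSpace 𝕜 F]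
  {φ : E → F} {A : E →L[𝕜] F}

theorem HasFDerivAt.hasDerivAt_comp_const_smul {c : 𝕜 → E} {c' : E} {ξ t : 𝕜}
    (hφ : HasFDerivAt φ A (ξ • c t)) (hc : HasDerivAt c c' t) :
    HasDerivAt (fun s => φ (ξ • c s)) (ξ • A c') t := by
  rw [← map_smul]
  exact hφ.comp_hasDerivAt t (hc.const_smul ξ)

theorem HasFDerivAt.hasDerivAt_comp_smul_const {v : E} {ξ : 𝕜} (hφ : HasFDerivAt φ A (ξ • v)) :
    HasDerivAt (fun s : 𝕜 => φ (s • v)) (A v) ξ := by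
  have h := hφ.comp_hasDerivAt ξ ((hasDerivAt_id' ξ).smul_const v)
  rwa [one_smul] at h

end ChainRule

theorem ContinuousLinearMap.apply_eq_fst_smul_add_snd_smul {𝕜 F : Type*} [Semiring 𝕜]
    [TopologicalSpace 𝕜] [AddCommMonoid F] [TopologicalSpace F] [Module 𝕜 F]
    (L : 𝕜 × 𝕜 →L[𝕜] F) (v : 𝕜 × 𝕜) : L v = v.1 • L (1, 0) + v.2 • L (0, 1) := by
  rw [← map_smul, ← map_smul, ← map_add]
  simp

theorem cramer_two {K : Type*} [Field K] {a b c d x y u w : K} (hdet : a * d - b * c ≠ 0)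
    (hu : a * x + b * y = u) (hw : c * x + d * y = w) :
    x = (d * u - b * w) / (a * d - b * c) ∧ y = (-c * u + a * w) / (a * d - b * c) := by
  constructor <;> rw [eq_div_iff hdet, ← hu, ← hw] <;> ring

/-- Inversion of the chain rule away from the scaling center (equation (13) of the paper):
for the singular scaled boundary parametrization `F(ζ,ξ) = ξ·γ(ζ)` with
`d(ζ) = γ₁'(ζ)γ₂(ζ) − γ₂'(ζ)γ₁(ζ) ≠ 0` and `ξ ≠ 0`, the parametric partial derivatives of
`φ̂(ζ',ξ') = φ(ξ'·γ(ζ'))` exist and the physical partial derivatives of `φ` at `p = ξ·γ(ζ)`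
are recovered as
`∂_xφ(p) = (γ₂·∂_ζφ̂ − ξγ₂'·∂_ξφ̂)/(ξ·d)` and `∂_yφ(p) = (−γ₁·∂_ζφ̂ + ξγ₁'·∂_ξφ̂)/(ξ·d)`. -/
theorem pushforward_derivative_formula
    (γ₁ γ₂ : ℝ → ℝ) (ζ : ℝ)
    (h₁ : DifferentiableAt ℝ γ₁ ζ) (h₂ : DifferentiableAt ℝ γ₂ ζ)
    (hd : deriv γ₁ ζ * γ₂ ζ - deriv γ₂ ζ * γ₁ ζ ≠ 0)
    (ξ : ℝ) (hξ : ξ ≠ 0)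
    (φ : ℝ × ℝ → ℝ)
    (hφ : DifferentiableAt ℝ φ (ξ • (γ₁ ζ, γ₂ ζ))) :
    DifferentiableAt ℝ (fun ζ' => φ (ξ • (γ₁ ζ', γ₂ ζ'))) ζ ∧
    DifferentiableAt ℝ (fun ξ' => φ (ξ' • (γ₁ ζ, γ₂ ζ))) ξ ∧
    fderiv ℝ φ (ξ • (γ₁ ζ, γ₂ ζ)) (1, 0)
      = (γ₂ ζ * deriv (fun ζ' => φ (ξ • (γ₁ ζ', γ₂ ζ'))) ζ
          - ξ * deriv γ₂ ζ * deriv (fun ξ' => φ (ξ' • (γ₁ ζ, γ₂ ζ))) ξ)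
        / (ξ * (deriv γ₁ ζ * γ₂ ζ - deriv γ₂ ζ * γ₁ ζ)) ∧
    fderiv ℝ φ (ξ • (γ₁ ζ, γ₂ ζ)) (0, 1)
      = (-(γ₁ ζ) * deriv (fun ζ' => φ (ξ • (γ₁ ζ', γ₂ ζ'))) ζ
          + ξ * deriv γ₁ ζ * deriv (fun ξ' => φ (ξ' • (γ₁ ζ, γ₂ ζ))) ξ)
        / (ξ * (deriv γ₁ ζ * γ₂ ζ - deriv γ₂ ζ * γ₁ ζ)) := by
  set A := fderiv ℝ φ (ξ • (γ₁ ζ, γ₂ ζ))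
  have hdζ := hφ.hasFDerivAt.hasDerivAt_comp_const_smul (c := fun t => (γ₁ t, γ₂ t))
    (h₁.hasDerivAt.prodMk h₂.hasDerivAt)
  have hdξ := hφ.hasFDerivAt.hasDerivAt_comp_smul_const
  have hdet : ξ * deriv γ₁ ζ * γ₂ ζ - ξ * deriv γ₂ ζ * γ₁ ζ
      = ξ * (deriv γ₁ ζ * γ₂ ζ - deriv γ₂ ζ * γ₁ ζ) := by ring
  refine ⟨hdζ.differentiableAt, hdξ.differentiableAt, ?_⟩
  rw [hdζ.deriv, hdξ.deriv, ← hdet]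
  refine cramer_two (hdet ▸ mul_ne_zero hξ hd) ?_ ?_
  · rw [A.apply_eq_fst_smul_add_snd_smul (deriv γ₁ ζ, deriv γ₂ ζ)]
    simp only [smul_eq_mul]
    ring
  · rw [A.apply_eq_fst_smul_add_snd_smul (γ₁ ζ, γ₂ ζ)]
    simp only [smul_eq_mul]
end

section
/- Let α^L, α^R ∈ ℝ and let β^L, β^R, β : ℝ → ℝ satisfy β = α^L·β^R − α^R·β^L (pointwise). Let B : ℝ → ℝ be differentiable, let C : ℝ → ℝ be arbitrary, and for S ∈ {L, R} let ĉ^S : ℝ → ℝ be differentiable at 0 with ĉ^S(0) = 0 and (ĉ^S)'(0) = 1. Define ĝ^S(ζ, ξ) := B(ξ) + (β^S(ξ)·B'(ξ) + α^S·C(ξ))·ĉ^S(ζ). Then for every ξ ∈ ℝ: (a) ĝ^L(0, ξ) = ĝ^R(0, ξ) = B(ξ) (continuity across the interface with trace B); (b) ∂_ζĝ^S(0, ξ) = β^S(ξ)·B'(ξ) + α^S·C(ξ) and ∂_ξĝ^R(0, ξ) = B'(ξ); and (c) the scalar C¹ gluing condition holds: α^R·∂_ζĝ^L(0, ξ) −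 α^L·∂_ζĝ^R(0, ξ) + β(ξ)·∂_ξĝ^R(0, ξ) = 0. -/
/-!
Since `ĉ^S(0) = 0` the ansatz reduces to `B` on the interface, and since `(ĉ^S)'(0) = 1` its
transversal derivative there is the coefficient `β^S B' + α^S C`. In the gluing combination the
`α^L α^R C` terms cancel, and what remains, `(α^R β^L − α^L β^R + β) B'`, vanishes by the
definition of `β`.
-/

section TransversalAnsatz

variable {𝕜 : Type*} [NontriviallyNormedField 𝕜] {B D c : 𝕜 → 𝕜} {g : 𝕜 → 𝕜 → 𝕜}

theorem ansatz_zero_eq (hg : ∀ ζ ξ, g ζ ξ = B ξ + D ξ * c ζ) (hc0 : c 0 = 0) (ξ : 𝕜) :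
    g 0 ξ = B ξ := by
  rw [hg, hc0, mul_zero, add_zero]

theorem deriv_ansatz_zero (hg : ∀ ζ ξ, g ζ ξ = B ξ + D ξ * c ζ) (hc0 : c 0 = 0) (ξ : 𝕜) :
    deriv (fun ξ' => g 0 ξ') ξ = deriv B ξ := by
  simp only [ansatz_zero_eq hg hc0]

theorem deriv_ansatz_transversal (hg : ∀ ζ ξ, g ζ ξ = B ξ + D ξ * c ζ) {ζ : 𝕜}
    (hc : DifferentiableAt 𝕜 c ζ) (ξ : 𝕜) :
    deriv (fun ζ' => g ζ' ξ) ζ = D ξ * deriv c ζ := by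
  simp only [hg]
  rw [deriv_const_add, deriv_const_mul _ hc]

end TransversalAnsatz

theorem interface_space_construction_general
    (αL αR : ℝ) (βL βR β : ℝ → ℝ)
    (hβ : ∀ ξ, β ξ = αL * βR ξ - αR * βL ξ)
    (B : ℝ → ℝ)
    (C : ℝ → ℝ)
    (cL cR : ℝ → ℝ)
    (hcL : DifferentiableAt ℝ cL 0) (hcR : DifferentiableAt ℝ cR 0)
    (hcL0 : cL 0 = 0) (hcR0 : cR 0 = 0)
    (hcL1 : deriv cL 0 = 1) (hcR1 : deriv cR 0 = 1)
    (gL gR : ℝ → ℝ → ℝ)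
    (hgL : ∀ ζ ξ, gL ζ ξ = B ξ + (βL ξ * deriv B ξ + αL * C ξ) * cL ζ)
    (hgR : ∀ ζ ξ, gR ζ ξ = B ξ + (βR ξ * deriv B ξ + αR * C ξ) * cR ζ) :
    ∀ ξ : ℝ,
      (gL 0 ξ = B ξ ∧ gR 0 ξ = B ξ) ∧
      (deriv (fun ζ => gL ζ ξ) 0 = βL ξ * deriv B ξ + αL * C ξ ∧
       deriv (fun ζ => gR ζ ξ) 0 = βR ξ * deriv B ξ + αR * C ξ ∧
       deriv (fun ξ' => gR 0 ξ') ξ = deriv B ξ) ∧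
      αR * deriv (fun ζ => gL ζ ξ) 0 - αL * deriv (fun ζ => gR ζ ξ) 0
        + β ξ * deriv (fun ξ' => gR 0 ξ') ξ = 0 := by
  intro ξ
  have hLζ : deriv (fun ζ => gL ζ ξ) 0 = βL ξ * deriv B ξ + αL * C ξ := by
    rw [deriv_ansatz_transversal hgL hcL, hcL1, mul_one]
  have hRζ : deriv (fun ζ => gR ζ ξ) 0 = βR ξ * deriv B ξ + αR * C ξ := by
    rw [deriv_ansatz_transversal hgR hcR, hcR1, mul_one]
  have hRξ := deriv_ansatz_zero hgR hcR0 ξ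
  refine ⟨⟨ansatz_zero_eq hgL hcL0 ξ, ansatz_zero_eq hgR hcR0 ξ⟩, ⟨hLζ, hRζ, hRξ⟩, ?_⟩
  rw [hLζ, hRζ, hRξ, hβ ξ]
  ring

/-- The interface-space construction: given gluing data `α^L, α^R, β^L, β^R` with
`β = α^L·β^R − α^R·β^L`, a differentiable trace function `B`, a transversal-derivative
function `C`, and functions `ĉ^S` differentiable at `0` with `ĉ^S(0) = 0`, `(ĉ^S)'(0) = 1`,
the parametric functions `ĝ^S(ζ,ξ) = B(ξ) + (β^S(ξ)·B'(ξ) + α^S·C(ξ))·ĉ^S(ζ)` satisfy: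
(a) continuity across the interface with trace `B`; (b) `∂_ζĝ^S(0,ξ) = β^S(ξ)B'(ξ) + α^S C(ξ)`
and `∂_ξĝ^R(0,ξ) = B'(ξ)`; and (c) the scalar C¹ gluing condition
`α^R·∂_ζĝ^L(0,ξ) − α^L·∂_ζĝ^R(0,ξ) + β(ξ)·∂_ξĝ^R(0,ξ) = 0`. -/
theorem interface_space_construction
    (αL αR : ℝ) (βL βR β : ℝ → ℝ)
    (hβ : ∀ ξ, β ξ = αL * βR ξ - αR * βL ξ)
    (B : ℝ → ℝ) (hB : Differentiable ℝ B)
    (C : ℝ → ℝ)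
    (cL cR : ℝ → ℝ)
    (hcL : DifferentiableAt ℝ cL 0) (hcR : DifferentiableAt ℝ cR 0)
    (hcL0 : cL 0 = 0) (hcR0 : cR 0 = 0)
    (hcL1 : deriv cL 0 = 1) (hcR1 : deriv cR 0 = 1)
    (gL gR : ℝ → ℝ → ℝ)
    (hgL : ∀ ζ ξ, gL ζ ξ = B ξ + (βL ξ * deriv B ξ + αL * C ξ) * cL ζ)
    (hgR : ∀ ζ ξ, gR ζ ξ = B ξ + (βR ξ * deriv B ξ + αR * C ξ) * cR ζ) :
    ∀ ξ : ℝ,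
      (gL 0 ξ = B ξ ∧ gR 0 ξ = B ξ) ∧
      (deriv (fun ζ => gL ζ ξ) 0 = βL ξ * deriv B ξ + αL * C ξ ∧
       deriv (fun ζ => gR ζ ξ) 0 = βR ξ * deriv B ξ + αR * C ξ ∧
       deriv (fun ξ' => gR 0 ξ') ξ = deriv B ξ) ∧
      αR * deriv (fun ζ => gL ζ ξ) 0 - αL * deriv (fun ζ => gR ζ ξ) 0
        + β ξ * deriv (fun ξ' => gR 0 ξ') ξ = 0 :=
  interface_space_construction_general αL αR βL βR β hβ B C cL cR hcL hcR hcL0 hcR0 hcL1 hcR1 gL gR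
    hgL hgR
end
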